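/- arXiv:2309.11141 — 2 statements merged into one kernel-verified Lean document; each statement's English description precedes it below -/
import Mathlib

section
/- Let T > 0, Θ > 0 and a ∈ ℝ. Assume either (i) a ≤ 0, or (ii) a > 0, √a·T < π/2 and √a·tan(√a·T) < Θ. Then there exists a constant k_min > 0 (depending only on a, T, Θ) such that every differentiable function k : [0,T] → ℝ with k(0) ≥ Θ and k'(t) ≥ −a − k(t)² for all t ∈ [0,T] satisfies k(t) ≥ k_min for all t ∈ [0,T]. -/
open Real

/-- Core comparison lemma in the case `a > 0`. -/
lemma riccati_core (T Θ a : ℝ) (hT : 0 < T) (hΘ : 0 < Θ) (ha : 0 < a)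
    (h1 : Real.sqrt a * T < Real.pi / 2)
    (h2 : Real.sqrt a * Real.tan (Real.sqrt a * T) < Θ) :
    ∃ kmin : ℝ, 0 < kmin ∧
      ∀ k : ℝ → ℝ,
        (∀ t ∈ Set.Icc (0 : ℝ) T, DifferentiableAt ℝ k t) →
        Θ ≤ k 0 →
        (∀ t ∈ Set.Icc (0 : ℝ) T, -a - (k t) ^ 2 ≤ deriv k t) →
        ∀ t ∈ Set.Icc (0 : ℝ) T, kmin ≤ k t := by
  set s := Real.sqrt a with hs_def
  have hs : 0 < s := Real.sqrt_pos.mpr ha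
  have hs2 : s ^ 2 = a := Real.sq_sqrt ha.le
  -- the terminal angle
  set ψ : ℝ := Real.arctan (Θ / s) - s * T with hψ_def
  have hsT : s * T < Real.arctan (Θ / s) := by
    have h0 : -(Real.pi / 2) < s * T := by
      have : (0:ℝ) ≤ s * T := by positivity
      linarith [Real.pi_pos]
    have := Real.arctan_strictMono (show Real.tan (s * T) < Θ / s by
      rw [lt_div_iff₀ hs]; linarith [h2])
    rwa [Real.arctan_tan h0 h1] at this
  have hψpos : 0 < ψ := by simp only [hψ_def]; linarith
  have hψlt : ψ < Real.pi / 2 := by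
    have := Real.arctan_lt_pi_div_two (Θ / s)
    have : Real.arctan (Θ / s) - s * T < Real.pi / 2 := by nlinarith [mul_pos hs hT]
    simpa [hψ_def] using this
  refine ⟨s * Real.tan ψ, mul_pos hs (Real.tan_pos_of_pos_of_lt_pi_div_two hψpos hψlt), ?_⟩
  intro k hk hk0 hk' t ht
  -- the comparison function φ
  set φ : ℝ → ℝ := fun u => Real.arctan (k u / s) + s * u with hφ_def
  have hφd : ∀ u ∈ Set.Icc (0 : ℝ) T,
      HasDerivAt φ (1 / (1 + (k u / s) ^ 2) * (deriv k u / s) + s) u := by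
    intro u hu
    exact (((hk u hu).hasDerivAt.div_const s).arctan).add
      (by simpa using (hasDerivAt_id u).const_mul s)
  have hmono : MonotoneOn φ (Set.Icc 0 T) := by
    apply monotoneOn_of_deriv_nonneg (convex_Icc 0 T)
    · intro u hu; exact ((hφd u hu).continuousAt).continuousWithinAt
    · intro u hu
      exact ((hφd u (interior_subset hu)).differentiableAt).differentiableWithinAt
    · intro u hu
      rw [(hφd u (interior_subset hu)).deriv]
      have hK' := hk' u (interior_subset hu)
      have hden : (0:ℝ) < 1 + (k u / s) ^ 2 := by positivity
      have key : deriv k u + a + (k u) ^ 2 ≥ 0 := by linarith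
      have : 1 / (1 + (k u / s) ^ 2) * (deriv k u / s) + s
          = (deriv k u + a + (k u) ^ 2) / (s * (1 + (k u / s) ^ 2)) := by
        rw [← hs2]
        field_simp
        ring
      rw [this]
      positivity
  have ht0 : (0:ℝ) ∈ Set.Icc (0:ℝ) T := ⟨le_refl _, hT.le⟩
  have hφ0 : Real.arctan (Θ / s) ≤ φ 0 := by
    simp only [hφ_def, mul_zero, add_zero]
    exact Real.arctan_strictMono.monotone (by gcongr)
  have hφt := hmono ht0 ht ht.1
  -- arctan (k t / s) ≥ ψ
  have harc : ψ ≤ Real.arctan (k t / s) := by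
    have hst : s * t ≤ s * T := mul_le_mul_of_nonneg_left ht.2 hs.le
    have : Real.arctan (Θ / s) ≤ Real.arctan (k t / s) + s * t := hφ0.trans hφt
    simp only [hψ_def]; linarith
  -- apply tan monotonicity
  have hmem1 : ψ ∈ Set.Ioo (-(Real.pi / 2)) (Real.pi / 2) :=
    ⟨by linarith [Real.pi_pos], hψlt⟩
  have hmem2 : Real.arctan (k t / s) ∈ Set.Ioo (-(Real.pi / 2)) (Real.pi / 2) :=
    ⟨Real.neg_pi_div_two_lt_arctan _, Real.arctan_lt_pi_div_two _⟩
  have htan : Real.tan ψ ≤ Real.tan (Real.arctan (k t / s)) :=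
    Real.strictMonoOn_tan.monotoneOn hmem1 hmem2 harc
  rw [Real.tan_arctan] at htan
  calc s * Real.tan ψ ≤ s * (k t / s) := mul_le_mul_of_nonneg_left htan hs.le
    _ = k t := by field_simp

/-- Riccati comparison core of Corollary 1 (`lemma:always_convex`):
under curvature condition (1) (`a ≤ 0`) or condition (2)
(`a > 0`, `√a·T < π/2`, `√a·tan(√a·T) < Θ`), there is a uniform positive lower
bound `k_min` (depending only on `a, T, Θ`) for any function satisfying the
Riccati differential inequality `k' ≥ -a - k²` with `k 0 ≥ Θ`. -/
theorem riccati_comparison_uniform_lower_bound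
    (T Θ a : ℝ) (hT : 0 < T) (hΘ : 0 < Θ)
    (hcond : a ≤ 0 ∨
      (0 < a ∧ Real.sqrt a * T < Real.pi / 2 ∧
        Real.sqrt a * Real.tan (Real.sqrt a * T) < Θ)) :
    ∃ kmin : ℝ, 0 < kmin ∧
      ∀ k : ℝ → ℝ,
        (∀ t ∈ Set.Icc (0 : ℝ) T, DifferentiableAt ℝ k t) →
        Θ ≤ k 0 →
        (∀ t ∈ Set.Icc (0 : ℝ) T, -a - (k t) ^ 2 ≤ deriv k t) →
        ∀ t ∈ Set.Icc (0 : ℝ) T, kmin ≤ k t := by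
  rcases hcond with ha | ⟨ha, h1, h2⟩
  · -- replace a by a small positive a'
    set s : ℝ := min (Real.pi / (4 * T)) (Θ / 2) with hs_def
    have hs : 0 < s := lt_min (by positivity) (by positivity)
    have hsqrt : Real.sqrt (s ^ 2) = s := Real.sqrt_sq hs.le
    have hsT : s * T ≤ Real.pi / 4 := by
      calc s * T ≤ Real.pi / (4 * T) * T :=
            mul_le_mul_of_nonneg_right (min_le_left _ _) hT.le
        _ = Real.pi / 4 := by field_simp
    have hsT2 : s * T < Real.pi / 2 :=
      hsT.trans_lt (by linarith [Real.pi_pos])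
    have hst0 : (0:ℝ) ≤ s * T := by positivity
    have htanle : Real.tan (s * T) ≤ 1 := by
      rw [← Real.tan_pi_div_four]
      exact Real.strictMonoOn_tan.monotoneOn
        ⟨by linarith [Real.pi_pos], hsT2⟩
        ⟨by linarith [Real.pi_pos], by linarith [Real.pi_pos]⟩ hsT
    have h2' : Real.sqrt (s ^ 2) * Real.tan (Real.sqrt (s ^ 2) * T) < Θ := by
      rw [hsqrt]
      calc s * Real.tan (s * T) ≤ s * 1 := mul_le_mul_of_nonneg_left htanle hs.le
        _ = s := mul_one s
        _ ≤ Θ / 2 := min_le_right _ _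
        _ < Θ := by linarith
    obtain ⟨kmin, hkmin, H⟩ := riccati_core T Θ (s ^ 2) hT hΘ (by positivity)
      (by rw [hsqrt]; exact hsT2) h2'
    refine ⟨kmin, hkmin, fun k hk hk0 hk' => H k hk hk0 fun t ht => ?_⟩
    have := hk' t ht
    nlinarith [sq_nonneg s]
  · exact riccati_core T Θ a hT hΘ ha h1 h2
end

section
/- Let a > 0, Θ > 0 and T > 0 with √a·T < π/2 and √a·tan(√a·T) < Θ. Then every differentiable function k : [0,T] → ℝ with k(0) ≥ Θ and k'(t) ≥ −a − k(t)² for all t ∈ [0,T] satisfies k(t) ≥ √a·tan(arctan(Θ/√a) − √a·t) > 0 for all t ∈ [0,T]. -/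
/-- Scalar comparison underlying Corollary 1 (`lemma:always_convex`) in the
positive-curvature case (condition (2)): if `√a·T < π/2` and
`√a·tan(√a·T) < Θ`, then any differentiable `k` on `[0,T]` with `k 0 ≥ Θ` and
`k' ≥ -a - k²` is bounded below on `[0,T]` by the (positive) solution
`√a · tan(arctan(Θ/√a) - √a·t)` of the comparison Riccati equation. -/
theorem riccati_comparison_positive_curvature
    (a Θ T : ℝ) (ha : 0 < a) (hΘ : 0 < Θ) (hT : 0 < T)
    (h1 : Real.sqrt a * T < Real.pi / 2)
    (h2 : Real.sqrt a * Real.tan (Real.sqrt a * T) < Θ)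
    (k : ℝ → ℝ)
    (hk : ∀ t ∈ Set.Icc (0 : ℝ) T, DifferentiableAt ℝ k t)
    (hk0 : Θ ≤ k 0)
    (hk' : ∀ t ∈ Set.Icc (0 : ℝ) T, -a - (k t) ^ 2 ≤ deriv k t) :
    ∀ t ∈ Set.Icc (0 : ℝ) T,
      Real.sqrt a * Real.tan (Real.arctan (Θ / Real.sqrt a) - Real.sqrt a * t) ≤ k t ∧
      0 < Real.sqrt a * Real.tan (Real.arctan (Θ / Real.sqrt a) - Real.sqrt a * t) := by
  set s := Real.sqrt a with hs_def
  have hs : 0 < s := Real.sqrt_pos.mpr ha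
  have hs2 : s ^ 2 = a := Real.sq_sqrt ha.le
  -- `s*T < arctan(Θ/s)`
  have hsT : s * T < Real.arctan (Θ / s) := by
    have htan : Real.tan (s * T) < Θ / s := by
      rw [lt_div_iff₀ hs]; linarith [h2, mul_comm (Real.tan (s * T)) s]
    have hsT0 : 0 < s * T := mul_pos hs hT
    have := Real.arctan_strictMono htan
    rwa [Real.arctan_tan (by linarith [Real.pi_pos]) h1] at this
  -- the transformed function
  set g : ℝ → ℝ := fun t => Real.arctan (k t / s) + s * t with hg_def
  have hd : ∀ t ∈ Set.Icc (0 : ℝ) T,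
      HasDerivAt g (1 / (1 + (k t / s) ^ 2) * (deriv k t / s) + s) t := by
    intro t ht
    have h1' : HasDerivAt (fun x => k x / s) (deriv k t / s) t :=
      ((hk t ht).hasDerivAt).div_const s
    have h2' : HasDerivAt (fun x => Real.arctan (k x / s))
        (1 / (1 + (k t / s) ^ 2) * (deriv k t / s)) t :=
      by have h := (Real.hasDerivAt_arctan (k t / s)).comp t h1'; exact h
    have h := h2'.add ((hasDerivAt_id t).const_mul s); rw [mul_one] at h; exact h
  have hderiv_nonneg : ∀ t ∈ Set.Icc (0 : ℝ) T,
      0 ≤ 1 / (1 + (k t / s) ^ 2) * (deriv k t / s) + s := by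
    intro t ht
    have hu := hk' t ht
    have hpos : (0:ℝ) < 1 + (k t / s) ^ 2 := by positivity
    have hks : (k t / s) ^ 2 = (k t) ^ 2 / a := by rw [div_pow, hs2]
    have h' : -s ≤ 1 / (1 + (k t / s) ^ 2) * (deriv k t / s) := by
      rw [one_div, inv_mul_eq_div, le_div_iff₀ hpos, le_div_iff₀ hs]
      have e : -s * (1 + (k t / s) ^ 2) * s = -(a + (k t) ^ 2) := by
        rw [hks]; field_simp; nlinarith [hs2]
      rw [e]; linarith
    linarith
  have hcont : ContinuousOn g (Set.Icc (0 : ℝ) T) := by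
    intro t ht
    exact ((hd t ht).continuousAt).continuousWithinAt
  have hmono : MonotoneOn g (Set.Icc (0 : ℝ) T) := by
    apply monotoneOn_of_deriv_nonneg (convex_Icc 0 T) hcont
    · intro t ht
      rw [interior_Icc] at ht
      exact ((hd t (Set.Ioo_subset_Icc_self ht)).differentiableAt).differentiableWithinAt
    · intro t ht
      rw [interior_Icc] at ht
      rw [(hd t (Set.Ioo_subset_Icc_self ht)).deriv]
      exact hderiv_nonneg t (Set.Ioo_subset_Icc_self ht)
  intro t ht
  obtain ⟨ht0, htT⟩ := ht
  have hg0 : g 0 ≤ g t := hmono ⟨le_refl 0, hT.le⟩ ⟨ht0, htT⟩ ht0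
  have harc0 : Real.arctan (Θ / s) ≤ Real.arctan (k 0 / s) :=
    Real.arctan_strictMono.monotone (by gcongr)
  -- ψ t := arctan(Θ/s) - s*t
  set ψ := Real.arctan (Θ / s) - s * t with hψ_def
  have hψ_le : ψ ≤ Real.arctan (k t / s) := by
    have : Real.arctan (k 0 / s) + s * 0 ≤ Real.arctan (k t / s) + s * t := hg0
    simp only [mul_zero, add_zero] at this
    have := le_trans harc0 this
    linarith
  have hψ_pos : 0 < ψ := by
    have : s * t ≤ s * T := by gcongr
    simp only [hψ_def]; linarith
  have hψ_lt : ψ < Real.pi / 2 := by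
    have := Real.arctan_lt_pi_div_two (Θ / s)
    have h0 : 0 ≤ s * t := by positivity
    simp only [hψ_def]; linarith
  have hpi2 : 0 < Real.pi / 2 := by linarith [Real.pi_pos]
  constructor
  · have htan_le : Real.tan ψ ≤ Real.tan (Real.arctan (k t / s)) :=
      Real.strictMonoOn_tan.monotoneOn ⟨by nlinarith [Real.pi_pos], hψ_lt⟩
        ⟨Real.neg_pi_div_two_lt_arctan _, Real.arctan_lt_pi_div_two _⟩ hψ_le
    rw [Real.tan_arctan] at htan_le
    calc s * Real.tan ψ ≤ s * (k t / s) := by gcongr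
    _ = k t := by field_simp
  · exact mul_pos hs (Real.tan_pos_of_pos_of_lt_pi_div_two hψ_pos hψ_lt)
end
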